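/- Let G be a locally finite graph whose vertex set can be partitioned into sets {V_i : i ∈ I} such that the subgraph induced by each V_i is isomorphic to the 4-regular tree, and suppose G has maximum degree D < ∞. Then for every finite nonempty set K of vertices, |∂_E K| ≥ |K|, and hence |∂_E K| / ∑_{v∈K} deg(v) ≥ 1/D; in particular G is nonamenable. -/

import Mathlib

/-!
Inside one fibre `S` the induced graph is a forest, so a nonempty finite `K ⊆ S` spans at most
`|K| - 1` edges: counted from both ends, at most `2|K| - 2` of the fibre-neighbours of vertices
of `K` lie in `K`. As every vertex has at least `3` (here `4`) neighbours in its fibre, at least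
`3|K| - (2|K| - 2) > |K|` fibre-edges leave `K`, all of them distinct edges of `∂_E K`. Summing
over the fibres gives `|∂_E K| ≥ |K|`, and then `∑_{v ∈ K} deg v ≤ D |K| ≤ D |∂_E K|`.
-/

/-- The edge boundary of a set `K` of vertices: the set of edges of `G` with exactly
one endpoint in `K`. -/
def edgeBdry {V : Type*} (G : SimpleGraph V) (K : Set V) : Set (Sym2 V) :=
  {e | e ∈ G.edgeSet ∧ ∃ u v : V, e = s(u, v) ∧ u ∈ K ∧ v ∉ K}

open Finset

namespace SimpleGraph

variable {V : Type*} {G : SimpleGraph V}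

theorem IsAcyclic.card_edgeFinset_lt [Fintype V] [Nonempty V] [Fintype G.edgeSet]
    (hG : G.IsAcyclic) : #G.edgeFinset < Fintype.card V := by
  classical
  obtain ⟨T, hGT, -, hT⟩ := connected_top.exists_isTree_le_of_le_of_isAcyclic le_top hG
  have hle : #G.edgeFinset ≤ #T.edgeFinset := card_le_card (edgeFinset_mono hGT)
  have := hT.card_edgeFinset
  omega

theorem ncard_neighborSet_induce (s : Set V) (v : s) :
    ((G.induce s).neighborSet v).ncard = (G.neighborSet v ∩ s).ncard := by
  rw [← Set.ncard_image_of_injective _ Subtype.val_injective]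
  congr 1
  ext w
  simp [and_comm]

theorem ncard_neighborSet_induce_eq_card_filter [G.LocallyFinite] (s : Set V)
    [DecidablePred (· ∈ s)] (v : s) :
    ((G.induce s).neighborSet v).ncard = #{w ∈ G.neighborFinset v | w ∈ s} := by
  rw [ncard_neighborSet_induce, ← Set.ncard_coe_finset]
  congr 1
  ext w
  simp

theorem degree_induce_finset [DecidableRel G.Adj] (K : Finset V) (v : (K : Set V))
    [Fintype ((G.induce (K : Set V)).neighborSet v)] :
    (G.induce (K : Set V)).degree v = #{w ∈ K | G.Adj v w} := by
  rw [← card_neighborSet_eq_degree, ← Nat.card_eq_fintype_card, Nat.card_coe_set_eq,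
    ncard_neighborSet_induce, ← Set.ncard_coe_finset]
  congr 1
  ext w
  simp [and_comm]

theorem sum_card_adj_add_two_le [DecidableRel G.Adj] {K : Finset V} (hK : K.Nonempty)
    (hacyc : (G.induce (K : Set V)).IsAcyclic) :
    ∑ v ∈ K, #{w ∈ K | G.Adj v w} + 2 ≤ 2 * #K := by
  classical
  have : Nonempty (K : Set V) := hK.to_subtype
  have hlt := hacyc.card_edgeFinset_lt
  have hsum := (G.induce (K : Set V)).sum_degrees_eq_twice_card_edges
  simp only [degree_induce_finset] at hsum
  rw [Finset.sum_finset_coe (fun v => #{w ∈ K | G.Adj v w})] at hsum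
  simp only [SetLike.coe_sort_coe, Fintype.card_coe] at hlt
  omega

theorem ncard_edgeBdry [G.LocallyFinite] [DecidableEq V] (K : Finset V) :
    (edgeBdry G K).ncard = ∑ v ∈ K, #(G.neighborFinset v \ K) := by
  have hbdry : edgeBdry G K =
      ((K.sigma fun v => G.neighborFinset v \ K).image fun p => s(p.1, p.2) : Set (Sym2 V)) := by
    ext e
    simp only [edgeBdry, Set.mem_ofPred_eq, coe_image, coe_sigma, Set.mem_image,
      Set.mem_sigma_iff, mem_coe, mem_sdiff, mem_neighborFinset]
    constructor
    · rintro ⟨he, u, w, rfl, hu, hw⟩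
      exact ⟨⟨u, w⟩, ⟨hu, he, hw⟩, rfl⟩
    · rintro ⟨⟨u, w⟩, ⟨hu, hadj, hw⟩, rfl⟩
      exact ⟨hadj, u, w, rfl, hu, hw⟩
  rw [hbdry, Set.ncard_coe_finset, card_image_of_injOn, card_sigma]
  rintro ⟨u, w⟩ huw ⟨u', w'⟩ huw' heq
  simp only [coe_sigma, Set.mem_sigma_iff, mem_coe, mem_sdiff] at huw huw'
  rcases Sym2.eq_iff.1 heq with ⟨rfl, rfl⟩ | ⟨rfl, rfl⟩
  · rfl
  · exact absurd huw.1 huw'.2.2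

theorem ncard_edgeBdry_le_sum_degree [G.LocallyFinite] (K : Finset V) :
    (edgeBdry G K).ncard ≤ ∑ v ∈ K, G.degree v := by
  classical
  rw [ncard_edgeBdry]
  exact sum_le_sum fun v _ =>
    (card_le_card sdiff_subset).trans_eq (card_neighborFinset_eq_degree G v)

theorem card_le_sum_card_neighborFinset_sdiff [G.LocallyFinite] [DecidableEq V] {S : Set V}
    [DecidablePred (· ∈ S)] (hS : (G.induce S).IsAcyclic) {K : Finset V} (hKS : ↑K ⊆ S)
    (hdeg : ∀ v ∈ K, 3 ≤ #{w ∈ G.neighborFinset v | w ∈ S}) :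
    #K ≤ ∑ v ∈ K, #{w ∈ G.neighborFinset v \ K | w ∈ S} := by
  classical
  rcases K.eq_empty_or_nonempty with rfl | hK
  · simp
  have hsplit : ∀ v ∈ K, #{w ∈ G.neighborFinset v | w ∈ S} =
      #{w ∈ G.neighborFinset v \ K | w ∈ S} + #{w ∈ K | G.Adj v w} := by
    intro v hv
    rw [← card_sdiff_add_card_inter _ K]
    congr 2
    · ext w
      simp only [mem_sdiff, mem_filter]
      tauto
    · ext w
      simp only [mem_inter, mem_filter, mem_neighborFinset]
      exact ⟨fun h => ⟨h.2, h.1.1⟩, fun h => ⟨⟨h.2, hKS h.1⟩, h.1⟩⟩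
  have hinner := sum_card_adj_add_two_le hK (hS.embedding (G.induceHomOfLE hKS))
  have := sum_le_sum hdeg
  rw [sum_congr rfl hsplit, sum_add_distrib, sum_const, smul_eq_mul] at this
  omega

theorem card_le_ncard_edgeBdry_of_isAcyclic_fibers {I : Type*} [DecidableEq I] [G.LocallyFinite]
    [DecidableEq V] (f : V → I) (hacyc : ∀ i, (G.induce {v | f v = i}).IsAcyclic)
    (hdeg : ∀ v, 3 ≤ #{w ∈ G.neighborFinset v | f w = f v}) (K : Finset V) :
    #K ≤ (edgeBdry G K).ncard := by
  have hfiber : ∀ i, #{v ∈ K | f v = i} ≤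
      ∑ v ∈ K with f v = i, #{w ∈ G.neighborFinset v \ K | f w = f v} := by
    intro i
    have key := card_le_sum_card_neighborFinset_sdiff (hacyc i) (K := {v ∈ K | f v = i})
      (fun v hv => (mem_filter.1 hv).2) (fun v hv => by
        obtain ⟨-, rfl⟩ := mem_filter.1 hv
        exact hdeg v)
    refine key.trans (sum_le_sum fun v hv => card_le_card fun w => ?_)
    obtain ⟨-, rfl⟩ := mem_filter.1 hv
    simp only [mem_filter, mem_sdiff, Set.mem_ofPred_eq]
    tauto
  calc #K = ∑ i ∈ K.image f, #{v ∈ K | f v = i} := card_eq_sum_card_image f K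
    _ ≤ ∑ i ∈ K.image f,
          ∑ v ∈ K with f v = i, #{w ∈ G.neighborFinset v \ K | f w = f v} :=
        sum_le_sum fun i _ => hfiber i
    _ = ∑ v ∈ K, #{w ∈ G.neighborFinset v \ K | f w = f v} :=
        sum_fiberwise_of_maps_to (fun v hv => mem_image_of_mem f hv) _
    _ ≤ ∑ v ∈ K, #(G.neighborFinset v \ K) := sum_le_sum fun v _ => card_filter_le _ _
    _ = (edgeBdry G K).ncard := (ncard_edgeBdry K).symm

theorem one_div_le_ncard_edgeBdry_div_sum_degree [G.LocallyFinite] {D : ℕ}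
    (hD : ∀ v, G.degree v ≤ D) {K : Finset V} (hK : K.Nonempty)
    (hcard : #K ≤ (edgeBdry G K).ncard) :
    (1 : ℝ) / D ≤ (edgeBdry G K).ncard / ∑ v ∈ K, (G.degree v : ℝ) := by
  rcases D.eq_zero_or_pos with rfl | hD0
  · simp only [Nat.cast_zero, div_zero]
    positivity
  have hsum : (0 : ℝ) < ∑ v ∈ K, (G.degree v : ℝ) := by
    have := (hK.card_pos.trans_le hcard).trans_le (ncard_edgeBdry_le_sum_degree K)
    exact_mod_cast this
  rw [div_le_div_iff₀ (by positivity) hsum, one_mul]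
  calc ∑ v ∈ K, (G.degree v : ℝ) ≤ ∑ v ∈ K, (D : ℝ) :=
        sum_le_sum fun v _ => by exact_mod_cast hD v
    _ = #K * D := by rw [sum_const, nsmul_eq_mul]
    _ ≤ (edgeBdry G K).ncard * D := by gcongr

end SimpleGraph

open SimpleGraph

/-- If the vertex set of a locally finite graph `G` of maximum degree `D` can be
partitioned into sets (the fibres of `f`) each of which induces a 4-regular tree, then
`|∂_E K| ≥ |K|` for every finite nonempty `K`, hence
`|∂_E K| / ∑_{v ∈ K} deg v ≥ 1/D`; in particular `G` is nonamenable. -/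
theorem partitioned_into_trees_nonamenable {V I : Type*} (G : SimpleGraph V)
    [G.LocallyFinite] (D : ℕ) (hD0 : 0 < D) (hD : ∀ v : V, G.degree v ≤ D)
    (f : V → I)
    (htree : ∀ i : I, (G.induce {v | f v = i}).IsTree)
    (hdeg : ∀ (i : I) (v : ↥{v | f v = i}),
      ((G.induce {v | f v = i}).neighborSet v).ncard = 4) :
    (∀ K : Finset V, K.Nonempty → K.card ≤ (edgeBdry G (↑K : Set V)).ncard) ∧
    (∀ K : Finset V, K.Nonempty →
      (1 : ℝ) / D ≤ (edgeBdry G (↑K : Set V)).ncard / ∑ v ∈ K, (G.degree v : ℝ)) ∧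
    (∃ c : ℝ, 0 < c ∧ ∀ K : Finset V, K.Nonempty →
      c ≤ (edgeBdry G (↑K : Set V)).ncard / ∑ v ∈ K, (G.degree v : ℝ)) := by
  classical
  have hfiber_deg : ∀ v, 3 ≤ #{w ∈ G.neighborFinset v | f w = f v} := fun v => by
    have h4 := hdeg (f v) ⟨v, rfl⟩
    rw [ncard_neighborSet_induce_eq_card_filter] at h4
    simp only [Set.mem_ofPred_eq] at h4
    omega
  have hbdry (K : Finset V) : #K ≤ (edgeBdry G K).ncard :=
    card_le_ncard_edgeBdry_of_isAcyclic_fibers f (fun i => (htree i).isAcyclic) hfiber_deg K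
  have hratio (K : Finset V) (hK : K.Nonempty) :=
    one_div_le_ncard_edgeBdry_div_sum_degree hD hK (hbdry K)
  exact ⟨fun K _ => hbdry K, hratio, 1 / D, by positivity, hratio⟩
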